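/- arXiv:quant-ph/0610195 — 5 statements merged into one kernel-verified Lean document; each statement's English description precedes it below -/
import Mathlib

section
/- Let F be a finite field and n a positive integer. Suppose C1 and C2 are linear subspaces of F^n with C2^⊥ ≤ C1, and suppose C1 = C2^⊥ + span{g1_1,…,g1_k} where the g1_i together with a basis of C2^⊥ form a basis of C1 (so k = dim C1 + dim C2 − n). Then there exist vectors g2_1,…,g2_k ∈ F^n such that C2 = C1^⊥ + span{g2_1,…,g2_k} and ⟨g1_i, g2_j⟩ = δ_{ij} for all i,j, where ⟨·,·⟩ is the standard dot product. -/
def dualCode {F : Type*} [Field F] {ι : Type*} [Fintype ι]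
    (C : Submodule F (ι → F)) : Submodule F (ι → F) where
  carrier := {y | ∀ x ∈ C, dotProduct x y = 0}
  add_mem' := by
    intro a b ha hb x hx
    simp [dotProduct_add, ha x hx, hb x hx]
  zero_mem' := by intro x hx; simp
  smul_mem' := by
    intro c a ha x hx
    simp [dotProduct_smul, ha x hx]

/-!
Let `L y = (⟨g1 i, y⟩)ᵢ`. Dualizing `C1 = C2^⊥ + span g1` gives `C1^⊥ = C2 ∩ ker L`. The map `L`
sends `C2` onto `F^k`: if `c` is orthogonal to `L C2`, then `∑ cᵢ g1ᵢ ∈ C2^⊥ ∩ span g1 = 0`, so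
`c = 0` by independence. Preimages `g2ⱼ ∈ C2` of the standard basis vectors are then dual to `g1`,
and every `x ∈ C2` splits as `(x - ∑ⱼ (L x)ⱼ g2ⱼ) + ∑ⱼ (L x)ⱼ g2ⱼ ∈ C1^⊥ + span g2`.
-/

open Matrix Submodule Set

section splitting

variable {R V : Type*} [Ring R] [AddCommGroup V] [Module R V] {κ : Type*} [Fintype κ] [DecidableEq κ]

theorem inf_ker_sup_span_range_eq {C : Submodule R V} (L : V →ₗ[R] κ → R) {v : κ → V}
    (hvC : ∀ j, v j ∈ C) (hLv : ∀ j, L (v j) = Pi.single j 1) :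
    C ⊓ LinearMap.ker L ⊔ span R (range v) = C := by
  have hspan : span R (range v) ≤ C := span_le.mpr (range_subset_iff.mpr hvC)
  refine le_antisymm (sup_le inf_le_left hspan) fun x hx => ?_
  set y := ∑ j, L x j • v j
  have hy : y ∈ span R (range v) :=
    sum_mem fun j _ => smul_mem _ _ (subset_span (mem_range_self j))
  have hLy : L y = L x := by
    simp only [y, map_sum, map_smul, hLv]
    exact (pi_eq_sum_univ' (L x)).symm
  have hxy : x - y ∈ C ⊓ LinearMap.ker L :=
    ⟨sub_mem hx (hspan hy), by simp [LinearMap.mem_ker, hLy]⟩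
  simpa using add_mem (mem_sup_left hxy) (mem_sup_right hy)

end splitting

section dualCode

variable {F : Type*} [Field F] {ι κ : Type*} [Fintype ι]

theorem dotProductBilin_isRefl :
    LinearMap.BilinForm.IsRefl (dotProductBilin F F : LinearMap.BilinForm F (ι → F)) :=
  fun x y h => by rwa [dotProductBilin_apply_apply, dotProduct_comm] at h

theorem dotProductBilin_nondegenerate :
    LinearMap.BilinForm.Nondegenerate (dotProductBilin F F : LinearMap.BilinForm F (ι → F)) := by
  classical
  refine LinearMap.BilinForm.Nondegenerate.ofSeparatingLeft fun x hx => funext fun i => ?_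
  simpa using hx (Pi.single i 1)

theorem dualCode_dualCode (C : Submodule F (ι → F)) : dualCode (dualCode C) = C :=
  LinearMap.BilinForm.orthogonal_orthogonal (B := dotProductBilin F F)
    dotProductBilin_nondegenerate dotProductBilin_isRefl C

theorem dualCode_bot : dualCode (⊥ : Submodule F (ι → F)) = ⊤ :=
  eq_top_iff.mpr fun y _ x hx => by simp [(mem_bot F).mp hx]

theorem dualCode_sup (C D : Submodule F (ι → F)) :
    dualCode (C ⊔ D) = dualCode C ⊓ dualCode D := by
  refine le_antisymm (le_inf (fun y hy x hx => hy x (mem_sup_left hx))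
    (fun y hy x hx => hy x (mem_sup_right hx))) ?_
  rintro y ⟨hyC, hyD⟩ _ hx
  obtain ⟨a, ha, b, hb, rfl⟩ := mem_sup.mp hx
  rw [add_dotProduct, hyC a ha, hyD b hb, add_zero]

theorem dualCode_span_range (g : κ → ι → F) :
    dualCode (span F (range g)) = LinearMap.ker (Matrix.of g).mulVecLin := by
  ext y
  refine ⟨fun hy => funext fun i => hy _ (subset_span (mem_range_self i)), fun hy x hx => ?_⟩
  have hle : span F (range g) ≤ LinearMap.ker ((dotProductBilin F F).flip y) :=
    span_le.mpr (range_subset_iff.mpr fun i => congrFun hy i)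
  exact hle hx

theorem map_mulVecLin_eq_top [Fintype κ] {C : Submodule F (ι → F)} {g : κ → ι → F}
    (hli : LinearIndependent F g) (hdisj : span F (range g) ⊓ dualCode C = ⊥) :
    C.map (Matrix.of g).mulVecLin = ⊤ := by
  rw [← dualCode_dualCode (C.map _), ← dualCode_bot]
  refine congrArg dualCode (eq_bot_iff.mpr fun c hc => ?_)
  have hcC : c ᵥ* Matrix.of g ∈ dualCode C := fun x hx => by
    rw [dotProduct_comm, ← dotProduct_mulVec, dotProduct_comm]
    exact hc _ (mem_map_of_mem hx)
  have hcg : c ᵥ* Matrix.of g ∈ span F (range g) := by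
    rw [vecMul_eq_sum]
    exact sum_mem fun i _ => smul_mem _ _ (subset_span (mem_range_self i))
  have hc0 : ∑ i, c i • Matrix.of g i = 0 := by
    simpa [hdisj, vecMul_eq_sum] using mem_inf.mpr ⟨hcg, hcC⟩
  exact (mem_bot F).mpr (funext (Fintype.linearIndependent_iff.mp hli c hc0))

end dualCode

theorem stmt0_general {F : Type*} [Field F] {n k : ℕ}
    (C1 C2 : Submodule F (Fin n → F))
    (g1 : Fin k → Fin n → F)
    (hspan : C1 = dualCode C2 ⊔ Submodule.span F (Set.range g1))
    (hli : LinearIndependent F g1)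
    (hdisj : Submodule.span F (Set.range g1) ⊓ dualCode C2 = ⊥) :
    ∃ g2 : Fin k → Fin n → F,
      C2 = dualCode C1 ⊔ Submodule.span F (Set.range g2) ∧
      ∀ i j, dotProduct (g1 i) (g2 j) = if i = j then 1 else 0 := by
  set L := (Matrix.of g1).mulVecLin
  have hC1 : dualCode C1 = C2 ⊓ LinearMap.ker L := by
    rw [hspan, dualCode_sup, dualCode_dualCode, dualCode_span_range]
  have hpre : ∀ j, ∃ v ∈ C2, L v = Pi.single j 1 := fun j =>
    (map_mulVecLin_eq_top hli hdisj).ge (mem_top (x := Pi.single j 1))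
  choose g2 hg2C2 hLg2 using hpre
  refine ⟨g2, by rw [hC1, inf_ker_sup_span_range_eq L hg2C2 hLg2], fun i j => ?_⟩
  rw [← Pi.single_apply]
  exact congrFun (hLg2 j) i

/-- existence of dual generator vectors for a CSS code pair. -/
theorem stmt0 {F : Type*} [Field F] [Fintype F] {n k : ℕ} (hn : 0 < n)
    (C1 C2 : Submodule F (Fin n → F))
    (hCSS : dualCode C2 ≤ C1)
    (g1 : Fin k → Fin n → F)
    (hspan : C1 = dualCode C2 ⊔ Submodule.span F (Set.range g1))
    (hli : LinearIndependent F g1)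
    (hdisj : Submodule.span F (Set.range g1) ⊓ dualCode C2 = ⊥)
    (hk : Module.finrank F C1 + Module.finrank F C2 = n + k) :
    ∃ g2 : Fin k → Fin n → F,
      C2 = dualCode C1 ⊔ Submodule.span F (Set.range g2) ∧
      ∀ i j, dotProduct (g1 i) (g2 j) = if i = j then 1 else 0 :=
  stmt0_general C1 C2 g1 hspan hli hdisj
end

section
/- Let (C1,C2) be an [[n,k]] code pair over F_q and (D1,D2) an [[N,K]] code pair over F_{q^k}. Then the concatenated pair (L1, L2) with L1 = π_1(D1) + ⊕_{i=1}^N C2^⊥ and L2 = π_2(D2) + ⊕_{i=1}^N C1^⊥ is an [[nN, kK]] code pair over F_q; that is, L2^⊥ ≤ L1 and dim L1 + dim L2 − nN = kK. -/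
/-- The direct sum of `N` copies of a code `C ≤ F^n` inside `F^(N×n)`. -/
def blockCode {F : Type*} [Field F] {n N : ℕ} (C : Submodule F (Fin n → F)) :
    Submodule F (Fin N × Fin n → F) where
  carrier := {v | ∀ i : Fin N, (fun j => v (i, j)) ∈ C}
  add_mem' := by
    intro a b ha hb i
    exact C.add_mem (ha i) (hb i)
  zero_mem' := by
    intro i
    exact C.zero_mem
  smul_mem' := by
    intro c a ha i
    exact C.smul_mem c (ha i)

/-!
The concatenation maps intertwine the forms: `π₁ x ⬝ᵥ π₂ y = Tr (x ⬝ᵥ y)`. Pairing a block of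
`π₁ x` with the `g₂ j ∈ C₂` reads off the coordinates of `x`, so `π₁` is injective and its
image meets `⊕ C₂^⊥` trivially; hence `dim (π₁(D) + ⊕ C₂^⊥) = k dim D + N dim C₂^⊥`, and
likewise for `π₂`.
The code `π₁(D₂^⊥) + ⊕ C₂^⊥` is orthogonal to `L₂` (using `C₂^⊥ ≤ C₁`) and, by this count and
`dim C₁^⊥ + dim C₂^⊥ + k = n`, has the dimension of `L₂^⊥`. So `L₂^⊥ = π₁(D₂^⊥) + ⊕ C₂^⊥ ≤ L₁`,
and the same identity gives `dim L₁ + dim L₂`.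
-/

open Matrix Module Submodule

section DualCode

variable {F : Type*} [Field F] {ι : Type*} [Fintype ι]

lemma mem_dualCode {C : Submodule F (ι → F)} {y : ι → F} :
    y ∈ dualCode C ↔ ∀ x ∈ C, x ⬝ᵥ y = 0 :=
  Iff.rfl

lemma le_dualCode_comm {A B : Submodule F (ι → F)} : A ≤ dualCode B ↔ B ≤ dualCode A :=
  ⟨fun h b hb a ha => dotProduct_comm a b ▸ h ha b hb,
    fun h a ha b hb => dotProduct_comm b a ▸ h hb a ha⟩

lemma le_dualCode_dualCode (C : Submodule F (ι → F)) : C ≤ dualCode (dualCode C) :=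
  le_dualCode_comm.1 le_rfl

lemma le_dualCode_sup {A B C : Submodule F (ι → F)} (hB : A ≤ dualCode B)
    (hC : A ≤ dualCode C) : A ≤ dualCode (B ⊔ C) :=
  le_dualCode_comm.2 (sup_le (le_dualCode_comm.1 hB) (le_dualCode_comm.1 hC))

lemma finrank_dualCode_add_finrank (C : Submodule F (ι → F)) :
    finrank F (dualCode C) + finrank F C = Fintype.card ι := by
  classical
  have h : dualCode C = C.dualAnnihilator.comap (dotProductEquiv F ι).toLinearMap := by
    ext y
    simp only [mem_dualCode, mem_comap, mem_dualAnnihilator, LinearEquiv.coe_coe,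
      dotProductEquiv_apply_apply, dotProduct_comm y]
  rw [h, comap_equiv_eq_map_symm, LinearEquiv.finrank_map_eq, add_comm,
    Subspace.finrank_add_finrank_dualAnnihilator_eq, finrank_fintype_fun_eq_card]

end DualCode

section BlockCode

variable {F : Type*} [Field F] {n N : ℕ}

lemma blockCode_mono {C C' : Submodule F (Fin n → F)} (h : C ≤ C') :
    blockCode (N := N) C ≤ blockCode C' :=
  fun _ hv i => h (hv i)

lemma dotProduct_eq_sum_blocks (u v : Fin N × Fin n → F) :
    u ⬝ᵥ v = ∑ i, (fun j => u (i, j)) ⬝ᵥ (fun j => v (i, j)) :=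
  Fintype.sum_prod_type _

lemma blockCode_dualCode_le (C : Submodule F (Fin n → F)) :
    blockCode (N := N) (dualCode C) ≤ dualCode (blockCode C) := fun v hv u hu => by
  rw [dotProduct_eq_sum_blocks]
  exact Finset.sum_eq_zero fun i _ => hv i _ (hu i)

def blockCodeEquiv (C : Submodule F (Fin n → F)) : blockCode (N := N) C ≃ₗ[F] (Fin N → C) where
  toFun v i := ⟨fun j => v.1 (i, j), v.2 i⟩
  map_add' _ _ := rfl
  map_smul' _ _ := rfl
  invFun w := ⟨fun q => (w q.1).1 q.2, fun i => (w i).2⟩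
  left_inv _ := rfl
  right_inv _ := rfl

lemma finrank_blockCode (C : Submodule F (Fin n → F)) :
    finrank F (blockCode (N := N) C) = N * finrank F C := by
  simp [(blockCodeEquiv C).finrank_eq, Module.finrank_pi_fintype]

end BlockCode

section Concatenation

variable {F K : Type*} [Field F] [Field K] [Algebra F K] {κ : Type*} [Fintype κ] {n N : ℕ}

lemma linearCombination_dotProduct_linearCombination [DecidableEq κ] {ι : Type*} [Fintype ι]
    {g g' : κ → ι → F} (hg : ∀ i j, g i ⬝ᵥ g' j = if i = j then 1 else 0) (r s : κ → F) :
    Fintype.linearCombination F g r ⬝ᵥ Fintype.linearCombination F g' s = r ⬝ᵥ s := by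
  simp only [Fintype.linearCombination_apply, sum_dotProduct, dotProduct_sum, smul_dotProduct,
    dotProduct_smul, hg, smul_eq_mul, mul_ite, mul_one, mul_zero]
  simp [dotProduct, mul_comm]

lemma apply_eq_dotProduct_equivFun [DecidableEq κ] {M M' : Type*} [AddCommGroup M] [Module F M]
    [AddCommGroup M'] [Module F M'] (B : M →ₗ[F] M' →ₗ[F] F) (b : Basis κ F M) (b' : Basis κ F M')
    (hb : ∀ i j, B (b i) (b' j) = if i = j then 1 else 0) (x : M) (y : M') :
    B x y = b.equivFun x ⬝ᵥ b'.equivFun y := by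
  conv_lhs => rw [← b.sum_equivFun x, ← b'.sum_equivFun y]
  simp only [map_sum, map_smul, LinearMap.sum_apply, LinearMap.smul_apply, hb, smul_eq_mul,
    mul_ite, mul_one, mul_zero]
  simp [dotProduct, mul_comm]

/-- The map `π` of the paper: coordinate `i` of `x` is expanded in the basis `b` and the
coefficients are encoded by the generators `g` in block `i`. -/
noncomputable def concMap (b : Basis κ F K) (g : κ → Fin n → F) :
    (Fin N → K) →ₗ[F] Fin N × Fin n → F :=
  (LinearEquiv.curry F F (Fin N) (Fin n)).symm.toLinearMap ∘ₗ
    (Fintype.linearCombination F g ∘ₗ b.equivFun.toLinearMap).compLeft (Fin N)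

lemma concMap_block (b : Basis κ F K) (g : κ → Fin n → F) (x : Fin N → K) (i : Fin N) :
    (fun j => concMap b g x (i, j)) = Fintype.linearCombination F g (b.equivFun (x i)) :=
  rfl

lemma concMap_apply (b : Basis κ F K) (g : κ → Fin n → F) (x : Fin N → K) (q : Fin N × Fin n) :
    concMap b g x q = ∑ a, b.repr (x q.1) a • g a q.2 := by
  change (fun j => concMap b g x (q.1, j)) q.2 = _
  rw [concMap_block, Fintype.linearCombination_apply, Finset.sum_apply]
  rfl

lemma range_concMap_le_blockCode (b : Basis κ F K) {g : κ → Fin n → F}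
    {C : Submodule F (Fin n → F)} (hg : ∀ j, g j ∈ C) :
    LinearMap.range (concMap (N := N) b g) ≤ blockCode C := by
  rintro _ ⟨x, rfl⟩ i
  rw [concMap_block, Fintype.linearCombination_apply]
  exact sum_mem fun a _ => smul_mem C _ (hg a)

variable [DecidableEq κ]

lemma concMap_dotProduct_concMap {b b' : Basis κ F K}
    (hb : ∀ i j, Algebra.trace F K (b i * b' j) = if i = j then 1 else 0)
    {g g' : κ → Fin n → F} (hg : ∀ i j, g i ⬝ᵥ g' j = if i = j then 1 else 0)
    (x y : Fin N → K) :
    concMap b g x ⬝ᵥ concMap b' g' y = Algebra.trace F K (x ⬝ᵥ y) := by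
  have htrace : ∀ u v, Algebra.trace F K (u * v) = b.equivFun u ⬝ᵥ b'.equivFun v :=
    apply_eq_dotProduct_equivFun (Algebra.traceForm F K) b b' hb
  rw [dotProduct_eq_sum_blocks, dotProduct, map_sum]
  refine Finset.sum_congr rfl fun i _ => ?_
  rw [htrace, concMap_block, concMap_block]
  exact linearCombination_dotProduct_linearCombination hg _ _

lemma concMap_eq_zero_of_mem_blockCode {b : Basis κ F K} {g g' : κ → Fin n → F}
    (hg : ∀ i j, g i ⬝ᵥ g' j = if i = j then 1 else 0) {C : Submodule F (Fin n → F)}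
    (hg' : ∀ j, g' j ∈ dualCode C) {x : Fin N → K} (hx : concMap b g x ∈ blockCode C) :
    x = 0 := by
  funext i
  refine b.equivFun.map_eq_zero_iff.1 (funext fun j => ?_)
  have h := linearCombination_dotProduct_linearCombination hg (b.equivFun (x i)) (Pi.single j 1)
  rw [Fintype.linearCombination_apply_single, one_smul, dotProduct_single, mul_one,
    ← concMap_block, hg' j _ (hx i)] at h
  exact h.symm

end Concatenation

section ConcatenatedCode

variable {F K : Type*} [Field F] [Field K] [Algebra F K] {κ : Type*} [Fintype κ] {n N : ℕ}

noncomputable def concatCode (b : Basis κ F K) (g : κ → Fin n → F) (D : Submodule K (Fin N → K))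
    (C : Submodule F (Fin n → F)) : Submodule F (Fin N × Fin n → F) :=
  (D.restrictScalars F).map (concMap b g) ⊔ blockCode C

lemma span_image_concMap_sup (b : Basis κ F K) (g : κ → Fin n → F) (D : Submodule K (Fin N → K))
    (C : Submodule F (Fin n → F)) :
    span F (concMap b g '' D) ⊔ blockCode C = concatCode b g D C := by
  rw [concatCode, span_image, ← coe_restrictScalars F D, span_eq]

lemma concatCode_mono (b : Basis κ F K) (g : κ → Fin n → F) {D D' : Submodule K (Fin N → K)}
    (hD : D ≤ D') (C : Submodule F (Fin n → F)) : concatCode b g D C ≤ concatCode b g D' C :=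
  sup_le_sup_right (map_mono (restrictScalars_mono F hD)) _

variable [DecidableEq κ]

lemma finrank_concatCode {b : Basis κ F K} {g g' : κ → Fin n → F}
    (hg : ∀ i j, g i ⬝ᵥ g' j = if i = j then 1 else 0) {C : Submodule F (Fin n → F)}
    (hg' : ∀ j, g' j ∈ dualCode C) (D : Submodule K (Fin N → K)) :
    finrank F (concatCode b g D C) = finrank F K * finrank K D + N * finrank F C := by
  have : FiniteDimensional F K := b.finiteDimensional_of_finite
  have hinj : Function.Injective (concMap (N := N) b g) :=
    (injective_iff_map_eq_zero _).2 fun x hx =>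
      concMap_eq_zero_of_mem_blockCode hg hg' (hx ▸ zero_mem _)
  have hdisj : (D.restrictScalars F).map (concMap b g) ⊓ blockCode C = ⊥ := by
    refine eq_bot_iff.2 ?_
    rintro _ ⟨⟨x, -, rfl⟩, hxC⟩
    rw [concMap_eq_zero_of_mem_blockCode hg hg' hxC, map_zero]
    exact zero_mem ⊥
  have hmap : finrank F ((D.restrictScalars F).map (concMap b g)) = finrank F K * finrank K D := by
    rw [LinearEquiv.finrank_eq (equivMapOfInjective _ hinj _).symm,
      LinearEquiv.finrank_eq ((restrictScalarsEquiv F K _ D).restrictScalars F),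
      finrank_mul_finrank]
  have h := finrank_sup_add_finrank_inf_eq ((D.restrictScalars F).map (concMap b g)) (blockCode C)
  rwa [hdisj, finrank_bot, add_zero, hmap, finrank_blockCode] at h

lemma concatCode_le_dualCode {b b' : Basis κ F K}
    (hb : ∀ i j, Algebra.trace F K (b i * b' j) = if i = j then 1 else 0)
    {g g' : κ → Fin n → F} (hg : ∀ i j, g i ⬝ᵥ g' j = if i = j then 1 else 0)
    {D D' : Submodule K (Fin N → K)} (hD : D' ≤ dualCode D)
    {C C' : Submodule F (Fin n → F)} (hC : C' ≤ dualCode C)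
    (hgC : ∀ j, g j ∈ dualCode C) (hg'C' : ∀ j, g' j ∈ dualCode C') :
    concatCode b g D' C' ≤ dualCode (concatCode b' g' D C) := by
  have hmap : (D'.restrictScalars F).map (concMap b g)
      ≤ dualCode ((D.restrictScalars F).map (concMap b' g')) := by
    rintro _ ⟨x, hx, rfl⟩ _ ⟨y, hy, rfl⟩
    rw [dotProduct_comm, concMap_dotProduct_concMap hb hg, dotProduct_comm, hD hx y hy, map_zero]
  refine sup_le (le_dualCode_sup hmap ?_) (le_dualCode_sup ?_ ?_)
  · exact LinearMap.map_le_range.trans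
      ((range_concMap_le_blockCode b hgC).trans (blockCode_dualCode_le C))
  · exact le_dualCode_comm.1 (LinearMap.map_le_range.trans
      ((range_concMap_le_blockCode b' hg'C').trans (blockCode_dualCode_le C')))
  · exact (blockCode_mono hC).trans (blockCode_dualCode_le C)

lemma dualCode_concatCode {b b' : Basis κ F K}
    (hb : ∀ i j, Algebra.trace F K (b i * b' j) = if i = j then 1 else 0)
    {g g' : κ → Fin n → F} (hg : ∀ i j, g i ⬝ᵥ g' j = if i = j then 1 else 0)
    {C C' : Submodule F (Fin n → F)} (hC : dualCode C' ≤ C)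
    (hk : finrank F C + finrank F C' = n + finrank F K)
    (hgC : ∀ j, g j ∈ C) (hg'C' : ∀ j, g' j ∈ C') (D : Submodule K (Fin N → K)) :
    dualCode (concatCode b' g' D (dualCode C)) = concatCode b g (dualCode D) (dualCode C') := by
  have hg'g : ∀ i j, g' i ⬝ᵥ g j = if i = j then 1 else 0 := by
    simp [dotProduct_comm, hg, eq_comm]
  have hle := concatCode_le_dualCode hb hg (le_refl (dualCode D))
    (hC.trans (le_dualCode_dualCode C)) (fun j => le_dualCode_dualCode C (hgC j))
    (fun j => le_dualCode_dualCode C' (hg'C' j))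
  refine (eq_of_le_of_finrank_eq hle ?_).symm
  have hL := finrank_dualCode_add_finrank (concatCode b' g' D (dualCode C))
  rw [finrank_concatCode hg'g (fun j => le_dualCode_dualCode C (hgC j))] at hL
  rw [finrank_concatCode hg (fun j => le_dualCode_dualCode C' (hg'C' j))]
  have hD := finrank_dualCode_add_finrank D
  have hC₁ := finrank_dualCode_add_finrank C
  have hC₂ := finrank_dualCode_add_finrank C'
  simp only [Fintype.card_prod, Fintype.card_fin] at hL hD hC₁ hC₂
  nlinarith

end ConcatenatedCode

theorem stmt11_general {F K : Type*} [Field F] [Field K] [Algebra F K]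
    {k n N Kd : ℕ}
    (b1 b2 : Module.Basis (Fin k) F K)
    (hdualb : ∀ i j, Algebra.trace F K (b1 i * b2 j) = if i = j then 1 else 0)
    (g1 g2 : Fin k → Fin n → F)
    (hg : ∀ i j, dotProduct (g1 i) (g2 j) = if i = j then 1 else 0)
    (C1 C2 : Submodule F (Fin n → F))
    (hCSSin : dualCode C2 ≤ C1)
    (hkin : Module.finrank F C1 + Module.finrank F C2 = n + k)
    (hC1 : C1 = dualCode C2 ⊔ Submodule.span F (Set.range g1))
    (hC2 : C2 = dualCode C1 ⊔ Submodule.span F (Set.range g2))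
    (D1 D2 : Submodule K (Fin N → K))
    (hD : dualCode D2 ≤ D1)
    (hKd : Module.finrank K D1 + Module.finrank K D2 = N + Kd)
    (P1 P2 : (Fin N → K) → (Fin N × Fin n → F))
    (hP1 : ∀ x q, P1 x q = ∑ j, b1.repr (x q.1) j • g1 j q.2)
    (hP2 : ∀ x q, P2 x q = ∑ j, b2.repr (x q.1) j • g2 j q.2)
    (L1 L2 : Submodule F (Fin N × Fin n → F))
    (hL1 : L1 = Submodule.span F (P1 '' (D1 : Set (Fin N → K)))
        ⊔ blockCode (dualCode C2))
    (hL2 : L2 = Submodule.span F (P2 '' (D2 : Set (Fin N → K)))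
        ⊔ blockCode (dualCode C1)) :
    dualCode L2 ≤ L1 ∧
    Module.finrank F L1 + Module.finrank F L2 = n * N + k * Kd := by
  have hP1' : P1 = concMap b1 g1 :=
    funext₂ fun x q => (hP1 x q).trans (concMap_apply b1 g1 x q).symm
  have hP2' : P2 = concMap b2 g2 :=
    funext₂ fun x q => (hP2 x q).trans (concMap_apply b2 g2 x q).symm
  rw [hP1', span_image_concMap_sup] at hL1
  rw [hP2', span_image_concMap_sup] at hL2
  have hg1 : ∀ j, g1 j ∈ C1 := fun j => hC1 ▸ mem_sup_right (subset_span ⟨j, rfl⟩)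
  have hg2 : ∀ j, g2 j ∈ C2 := fun j => hC2 ▸ mem_sup_right (subset_span ⟨j, rfl⟩)
  have hk : finrank F K = k := by simp [finrank_eq_card_basis b1]
  have hL2dual := dualCode_concatCode hdualb hg hCSSin (hk ▸ hkin) hg1 hg2 D2
  rw [← hL2] at hL2dual
  refine ⟨hL1 ▸ hL2dual ▸ concatCode_mono b1 g1 hD _, ?_⟩
  have hg2C2 : ∀ j, g2 j ∈ dualCode (dualCode C2) := fun j => le_dualCode_dualCode C2 (hg2 j)
  have hdimL2 := finrank_dualCode_add_finrank L2
  have hdimD2 := finrank_dualCode_add_finrank D2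
  rw [hL2dual, finrank_concatCode hg hg2C2, hk] at hdimL2
  rw [hL1, finrank_concatCode hg hg2C2, hk]
  simp only [Fintype.card_prod, Fintype.card_fin] at hdimL2 hdimD2
  nlinarith

/-- the concatenation of an `[[n,k]]` code pair and an `[[N,K]]`
code pair is an `[[nN,kK]]` code pair. -/
theorem stmt11 {F K : Type*} [Field F] [Fintype F] [Field K] [Fintype K] [Algebra F K]
    {k n N Kd : ℕ}
    (b1 b2 : Module.Basis (Fin k) F K)
    (hdualb : ∀ i j, Algebra.trace F K (b1 i * b2 j) = if i = j then 1 else 0)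
    (g1 g2 : Fin k → Fin n → F)
    (hg : ∀ i j, dotProduct (g1 i) (g2 j) = if i = j then 1 else 0)
    (C1 C2 : Submodule F (Fin n → F))
    (hCSSin : dualCode C2 ≤ C1)
    (hkin : Module.finrank F C1 + Module.finrank F C2 = n + k)
    (hC1 : C1 = dualCode C2 ⊔ Submodule.span F (Set.range g1))
    (hC2 : C2 = dualCode C1 ⊔ Submodule.span F (Set.range g2))
    (D1 D2 : Submodule K (Fin N → K))
    (hD : dualCode D2 ≤ D1)
    (hKd : Module.finrank K D1 + Module.finrank K D2 = N + Kd)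
    (P1 P2 : (Fin N → K) → (Fin N × Fin n → F))
    (hP1 : ∀ x q, P1 x q = ∑ j, b1.repr (x q.1) j • g1 j q.2)
    (hP2 : ∀ x q, P2 x q = ∑ j, b2.repr (x q.1) j • g2 j q.2)
    (L1 L2 : Submodule F (Fin N × Fin n → F))
    (hL1 : L1 = Submodule.span F (P1 '' (D1 : Set (Fin N → K)))
        ⊔ blockCode (dualCode C2))
    (hL2 : L2 = Submodule.span F (P2 '' (D2 : Set (Fin N → K)))
        ⊔ blockCode (dualCode C1)) :
    dualCode L2 ≤ L1 ∧
    Module.finrank F L1 + Module.finrank F L2 = n * N + k * Kd :=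
  stmt11_general b1 b2 hdualb g1 g2 hg C1 C2 hCSSin hkin hC1 hC2 D1 D2 hD hKd P1 P2 hP1 hP2 L1 L2
    hL1 hL2
end

section
/- Steane enlargement (generator matrix form): let U be a generator matrix of a linear code C ≤ F_q^{N} with C^⊥ ≤ C, enlarged to C' with full-rank generator matrix W = [U; V], dim C' ≥ dim C + 2, and let M be an invertible square matrix of size dim C' − dim C over F_q with no eigenvalue in F_q. Then the matrix G = [[U,0],[0,U],[V,MV]] generates a symplectic code: the F_q-span of the rows of G contains its dual with respect to the symplectic form f_s((u_x|u_z),(v_x|v_z)) = ⟨u_x,v_z⟩ − ⟨u_z,v_x⟩ on F_q^{2N}. -/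
/-- The dual of a subspace of `F^n × F^n` with respect to the standard
symplectic form `f_s((u_x|u_z),(v_x|v_z)) = ⟨u_x,v_z⟩ - ⟨u_z,v_x⟩`. -/
def sympDual {F : Type*} [Field F] {n : ℕ}
    (S : Submodule F ((Fin n → F) × (Fin n → F))) :
    Submodule F ((Fin n → F) × (Fin n → F)) where
  carrier := {y | ∀ x ∈ S,
    dotProduct x.1 y.2 - dotProduct x.2 y.1 = 0}
  add_mem' := by
    intro a b ha hb x hx
    have h1 := ha x hx
    have h2 := hb x hx
    simp only [Prod.fst_add, Prod.snd_add, dotProduct_add] at *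
    linear_combination h1 + h2
  zero_mem' := by intro x hx; simp
  smul_mem' := by
    intro c a ha x hx
    have h := ha x hx
    simp only [Prod.smul_fst, Prod.smul_snd, dotProduct_smul,
      smul_eq_mul] at *
    linear_combination c * h

section SymplecticDual

variable {F : Type*} [Field F] {n : ℕ}

theorem sympDual_antitone {S T : Submodule F ((Fin n → F) × (Fin n → F))} (h : S ≤ T) :
    sympDual T ≤ sympDual S :=
  fun _ hy x hx => hy x (h hx)

theorem sympDual_prod (C D : Submodule F (Fin n → F)) :
    sympDual (C.prod D) = (dualCode D).prod (dualCode C) := by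
  ext y
  constructor
  · intro hy
    refine ⟨fun d hd => ?_, fun c hc => ?_⟩
    · simpa using hy (0, d) ⟨C.zero_mem, hd⟩
    · simpa using hy (c, 0) ⟨hc, D.zero_mem⟩
  · rintro ⟨hy₁, hy₂⟩ x ⟨hx₁, hx₂⟩
    rw [hy₂ x.1 hx₁, hy₁ x.2 hx₂, sub_zero]

end SymplecticDual

theorem stmt15_general {F : Type*} [Field F] {N r s : ℕ}
    (U : Fin r → Fin N → F) (V : Fin s → Fin N → F)
    (C : Submodule F (Fin N → F)) (hC : C = Submodule.span F (Set.range U))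
    (hCdual : dualCode C ≤ C)
    (M : Matrix (Fin s) (Fin s) F)
    (S : Submodule F ((Fin N → F) × (Fin N → F)))
    (hS : S = Submodule.span F
      ((Set.range fun i => (U i, (0 : Fin N → F))) ∪
       (Set.range fun i => ((0 : Fin N → F), U i)) ∪
       (Set.range fun j => (V j, fun t => ∑ l, M j l * V l t)))) :
    sympDual S ≤ S := by
  have hCC : C.prod C ≤ S := by
    rw [hS, hC, ← LinearMap.span_inl_union_inr, ← Set.range_comp, ← Set.range_comp]
    exact Submodule.span_mono Set.subset_union_left
  calc sympDual S ≤ sympDual (C.prod C) := sympDual_antitone hCC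
    _ = (dualCode C).prod (dualCode C) := sympDual_prod C C
    _ ≤ C.prod C := Submodule.prod_mono hCdual hCdual
    _ ≤ S := hCC

/-- Steane's enlargement construction yields a symplectic
(dual-containing) code. -/
theorem stmt15 {F : Type*} [Field F] [Fintype F] {N r s : ℕ} (hs : 2 ≤ s)
    (U : Fin r → Fin N → F) (V : Fin s → Fin N → F)
    (hW : LinearIndependent F (Sum.elim U V))
    (C : Submodule F (Fin N → F)) (hC : C = Submodule.span F (Set.range U))
    (hCdual : dualCode C ≤ C)
    (M : Matrix (Fin s) (Fin s) F) (hMunit : IsUnit M.det)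
    (hMev : ∀ (x : Fin s → F) (lam : F), x ≠ 0 → Matrix.vecMul x M ≠ lam • x)
    (S : Submodule F ((Fin N → F) × (Fin N → F)))
    (hS : S = Submodule.span F
      ((Set.range fun i => (U i, (0 : Fin N → F))) ∪
       (Set.range fun i => ((0 : Fin N → F), U i)) ∪
       (Set.range fun j => (V j, fun t => ∑ l, M j l * V l t)))) :
    sympDual S ≤ S :=
  stmt15_general U V C hC hCdual M S hS
end

section
/- Minimum distance of Steane's enlarged code: under the hypotheses above (C^⊥ ≤ C ≤ C', dim C' ≥ dim C + 2, M fixed-point-free), every nonzero element (u|v) of span(G) that lies outside C'^⊥ ⊕ C'^⊥ satisfies w([u,v]) ≥ min{ d, d'' }, where d = w(C \ C'^⊥) and d'' = min{ w([u,v]) : u,v ∈ C' \ C'^⊥, v ≠ λu ∀λ ∈ F_q }. Consequently the enlarged symplectic code has minimum distance at least min{ d, ⌈(q+1)/q · d'⌉ } where d' = w(C' \ C'^⊥). -/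
open Finset Submodule Matrix

section Weights

variable {F ι : Type*} [Field F] [DecidableEq F] [Fintype ι]

def symplecticWeight (u v : ι → F) : ℕ := #{i | u i ≠ 0 ∨ v i ≠ 0}

lemma hammingNorm_le_symplecticWeight_left (u v : ι → F) :
    hammingNorm u ≤ symplecticWeight u v :=
  card_le_card (monotone_filter_right _ fun _ _ h => Or.inl h)

lemma hammingNorm_le_symplecticWeight_right (u v : ι → F) :
    hammingNorm v ≤ symplecticWeight u v :=
  card_le_card (monotone_filter_right _ fun _ _ h => Or.inr h)

section Counting

variable [Fintype F]

lemma ite_ne_zero_add_card_add_mul_ne_zero (a b : F) :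
    (if a ≠ 0 then 1 else 0) + #{μ : F | b + μ * a ≠ 0}
      = if a ≠ 0 ∨ b ≠ 0 then Fintype.card F else 0 := by
  by_cases ha : a = 0
  · subst ha
    by_cases hb : b = 0 <;> simp [hb]
  · have hroot : ({μ : F | b + μ * a ≠ 0} : Finset F) = univ.erase (-b / a) := by
      ext μ
      simp only [mem_filter, mem_erase, mem_univ, true_and, and_true]
      rw [ne_eq, ne_eq, eq_div_iff ha]
      refine not_congr ⟨fun h => ?_, fun h => ?_⟩ <;> linear_combination h
    rw [hroot, card_erase_of_mem (mem_univ _), card_univ]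
    have := Fintype.card_pos (α := F)
    simp only [ne_eq, ha, not_false_eq_true, if_true, true_or]
    omega

theorem hammingNorm_add_sum_hammingNorm_add_smul (u v : ι → F) :
    hammingNorm u + ∑ μ : F, hammingNorm (v + μ • u) = Fintype.card F * symplecticWeight u v := by
  simp only [hammingNorm, symplecticWeight, card_filter, Pi.add_apply, Pi.smul_apply,
    smul_eq_mul]
  rw [sum_comm, ← sum_add_distrib, mul_sum]
  refine sum_congr rfl fun i _ => ?_
  rw [← card_filter, ite_ne_zero_add_card_add_mul_ne_zero, mul_ite, mul_one, mul_zero]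

theorem ceil_le_symplecticWeight {u v : ι → F} {d : ℕ} (hu : d ≤ hammingNorm u)
    (hv : ∀ μ : F, d ≤ hammingNorm (v + μ • u)) :
    ⌈((Fintype.card F + 1) * d : ℚ) / Fintype.card F⌉₊ ≤ symplecticWeight u v := by
  have hq : (0 : ℚ) < Fintype.card F := by exact_mod_cast Fintype.card_pos
  have hcount : (Fintype.card F + 1) * d ≤ Fintype.card F * symplecticWeight u v :=
    calc (Fintype.card F + 1) * d = d + ∑ _μ : F, d := by
          rw [sum_const, card_univ, smul_eq_mul]; ring
      _ ≤ hammingNorm u + ∑ μ : F, hammingNorm (v + μ • u) :=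
          add_le_add hu (sum_le_sum fun μ _ => hv μ)
      _ = Fintype.card F * symplecticWeight u v :=
          hammingNorm_add_sum_hammingNorm_add_smul u v
  rw [Nat.ceil_le, div_le_iff₀ hq, mul_comm (symplecticWeight u v : ℚ)]
  exact_mod_cast hcount

end Counting

-- `sInf ∅ = 0`: both weights are `0` when `C ≤ D`.
noncomputable def relMinWeight (C D : Submodule F (ι → F)) : ℕ :=
  sInf {m | ∃ x ∈ C, x ∉ D ∧ m = hammingNorm x}

noncomputable def relPairMinWeight (C D : Submodule F (ι → F)) : ℕ :=
  sInf {m | ∃ u v : ι → F, u ∈ C ∧ u ∉ D ∧ v ∈ C ∧ v ∉ D ∧ (∀ μ : F, v ≠ μ • u) ∧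
    m = symplecticWeight u v}

variable {C D : Submodule F (ι → F)} {u v : ι → F}

lemma relMinWeight_le_hammingNorm (hu : u ∈ C) (huD : u ∉ D) : relMinWeight C D ≤ hammingNorm u :=
  Nat.sInf_le ⟨u, hu, huD, rfl⟩

lemma relMinWeight_le_symplecticWeight (hu : u ∈ C) (hv : v ∈ C) (hD : ¬(u ∈ D ∧ v ∈ D)) :
    relMinWeight C D ≤ symplecticWeight u v := by
  rcases not_and_or.mp hD with huD | hvD
  · exact (relMinWeight_le_hammingNorm hu huD).trans (hammingNorm_le_symplecticWeight_left u v)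
  · exact (relMinWeight_le_hammingNorm hv hvD).trans (hammingNorm_le_symplecticWeight_right u v)

lemma relPairMinWeight_le_symplecticWeight (hu : u ∈ C) (hv : v ∈ C) (huD : u ∉ D)
    (hvD : ∀ μ : F, v + μ • u ∉ D) : relPairMinWeight C D ≤ symplecticWeight u v :=
  Nat.sInf_le ⟨u, v, hu, huD, hv, by simpa using hvD 0,
    fun μ h => hvD (-μ) (by simp [h]), rfl⟩

lemma ceil_relMinWeight_le_symplecticWeight [Fintype F] (hu : u ∈ C) (hv : v ∈ C) (huD : u ∉ D)
    (hvD : ∀ μ : F, v + μ • u ∉ D) :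
    ⌈((Fintype.card F + 1) * relMinWeight C D : ℚ) / Fintype.card F⌉₊ ≤ symplecticWeight u v :=
  ceil_le_symplecticWeight (relMinWeight_le_hammingNorm hu huD)
    fun μ => relMinWeight_le_hammingNorm (add_mem hv (smul_mem _ μ hu)) (hvD μ)

end Weights

section Duality

variable {F : Type*} [Field F]

lemma dualCode_antitone {ι : Type*} [Fintype ι] {C D : Submodule F (ι → F)} (h : C ≤ D) :
    dualCode D ≤ dualCode C :=
  fun _ hy x hx => hy x (h hx)

lemma prod_dualCode_le_sympDual {n : ℕ} {C : Submodule F (Fin n → F)}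
    {S : Submodule F ((Fin n → F) × (Fin n → F))} (hS : S ≤ C.prod C) :
    (dualCode C).prod (dualCode C) ≤ sympDual S := by
  rintro y ⟨hy₁, hy₂⟩ x hx
  obtain ⟨hx₁, hx₂⟩ := hS hx
  rw [hy₂ _ hx₁, hy₁ _ hx₂, sub_zero]

end Duality

lemma eq_zero_of_linearCombination_mem_span {R E ι κ : Type*} [Ring R] [AddCommGroup E]
    [Module R E] [Fintype κ] {U : ι → E} {V : κ → E} (hW : LinearIndependent R (Sum.elim U V))
    {x : κ → R} (hx : Fintype.linearCombination R V x ∈ span R (Set.range U)) : x = 0 := by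
  obtain ⟨-, hV, hUV⟩ := linearIndependent_sum.mp hW
  rw [Sum.elim_comp_inl, Sum.elim_comp_inr] at hUV
  rw [Sum.elim_comp_inr, linearIndependent_iff_injective_fintypeLinearCombination] at hV
  refine hV ((disjoint_def.mp hUV _ hx ?_).trans (map_zero _).symm)
  rw [← Fintype.range_linearCombination]
  exact ⟨x, rfl⟩

section Steane

variable {F : Type*} [Field F] {N r s : ℕ}
  (U : Fin r → Fin N → F) (V : Fin s → Fin N → F) (M : Matrix (Fin s) (Fin s) F)

def steaneCode : Submodule F ((Fin N → F) × (Fin N → F)) :=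
  span F ((Set.range fun i => (U i, (0 : Fin N → F))) ∪
    (Set.range fun i => ((0 : Fin N → F), U i)) ∪
    (Set.range fun j => (V j, fun t => ∑ l, M j l * V l t)))

lemma exists_of_mem_steaneCode {p : (Fin N → F) × (Fin N → F)} (hp : p ∈ steaneCode U V M) :
    ∃ a ∈ span F (Set.range U), ∃ b ∈ span F (Set.range U), ∃ x : Fin s → F,
      p = (a + Fintype.linearCombination F V x, b + Fintype.linearCombination F V (x ᵥ* M)) := by
  induction hp using Submodule.span_induction with
  | mem p hp =>
    rcases hp with (⟨i, rfl⟩ | ⟨i, rfl⟩) | ⟨j, rfl⟩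
    · exact ⟨U i, subset_span ⟨i, rfl⟩, 0, zero_mem _, 0, by simp⟩
    · exact ⟨0, zero_mem _, U i, subset_span ⟨i, rfl⟩, 0, by simp⟩
    · refine ⟨0, zero_mem _, 0, zero_mem _, Pi.single j 1, ?_⟩
      ext t <;> simp [Fintype.linearCombination_apply, Finset.sum_apply]
  | zero => exact ⟨0, zero_mem _, 0, zero_mem _, 0, by simp [Prod.zero_eq_mk]⟩
  | add p q _ _ hp hq =>
    obtain ⟨a, ha, b, hb, x, rfl⟩ := hp
    obtain ⟨a', ha', b', hb', x', rfl⟩ := hq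
    refine ⟨a + a', add_mem ha ha', b + b', add_mem hb hb', x + x', ?_⟩
    simp only [Prod.mk_add_mk, map_add, Matrix.add_vecMul]
    rw [Prod.mk.injEq]
    constructor <;> abel
  | smul c p _ hp =>
    obtain ⟨a, ha, b, hb, x, rfl⟩ := hp
    exact ⟨c • a, smul_mem _ c ha, c • b, smul_mem _ c hb, c • x, by simp [smul_add, smul_vecMul]⟩

lemma steaneCode_le_prod :
    steaneCode U V M ≤
      (span F (Set.range (Sum.elim U V))).prod (span F (Set.range (Sum.elim U V))) := by
  intro p hp
  obtain ⟨a, ha, b, hb, x, rfl⟩ := exists_of_mem_steaneCode U V M hp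
  have hU : span F (Set.range U) ≤ span F (Set.range (Sum.elim U V)) :=
    span_mono (Set.Sum.elim_range U V ▸ Set.subset_union_left)
  have hV : ∀ y, Fintype.linearCombination F V y ∈ span F (Set.range (Sum.elim U V)) := by
    intro y
    refine span_mono (Set.Sum.elim_range U V ▸ Set.subset_union_right) ?_
    rw [← Fintype.range_linearCombination]
    exact ⟨y, rfl⟩
  exact ⟨add_mem (hU ha) (hV x), add_mem (hU hb) (hV _)⟩

variable {U V M}

theorem mem_steaneCode_dichotomy (hW : LinearIndependent F (Sum.elim U V))
    (hM : ∀ (x : Fin s → F) (μ : F), x ≠ 0 → x ᵥ* M ≠ μ • x)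
    {u v : Fin N → F} (huv : (u, v) ∈ steaneCode U V M) :
    (u ∈ span F (Set.range U) ∧ v ∈ span F (Set.range U)) ∨
      (u ∉ span F (Set.range U) ∧ ∀ μ : F, v + μ • u ∉ span F (Set.range U)) := by
  obtain ⟨a, ha, b, hb, x, hp⟩ := exists_of_mem_steaneCode U V M huv
  obtain ⟨rfl, rfl⟩ := Prod.mk.inj hp
  by_cases hx : x = 0
  · subst hx
    left
    simpa using ⟨ha, hb⟩
  have hout : ∀ c ∈ span F (Set.range U), ∀ y ≠ 0,
      c + Fintype.linearCombination F V y ∉ span F (Set.range U) := fun c hc y hy h =>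
    hy (eq_zero_of_linearCombination_mem_span hW (by simpa using sub_mem h hc))
  refine Or.inr ⟨hout a ha x hx, fun μ => ?_⟩
  have hcoords :
      b + Fintype.linearCombination F V (x ᵥ* M) + μ • (a + Fintype.linearCombination F V x)
        = (b + μ • a) + Fintype.linearCombination F V (x ᵥ* M + μ • x) := by
    simp only [map_add, map_smul, smul_add]
    abel
  rw [hcoords]
  refine hout _ (add_mem hb (smul_mem _ μ ha)) _ fun h => hM x (-μ) hx ?_
  rw [neg_smul]
  exact eq_neg_of_add_eq_zero_left h

end Steane

theorem stmt16_general {F : Type*} [Field F] [Fintype F] [DecidableEq F]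
    {N r s : ℕ}
    (U : Fin r → Fin N → F) (V : Fin s → Fin N → F)
    (hW : LinearIndependent F (Sum.elim U V))
    (C C' : Submodule F (Fin N → F))
    (hC : C = Submodule.span F (Set.range U))
    (hC' : C' = Submodule.span F (Set.range (Sum.elim U V)))
    (hCdual : dualCode C ≤ C)
    (M : Matrix (Fin s) (Fin s) F)
    (hMev : ∀ (x : Fin s → F) (lam : F), x ≠ 0 → Matrix.vecMul x M ≠ lam • x)
    (S : Submodule F ((Fin N → F) × (Fin N → F)))
    (hS : S = Submodule.span F
      ((Set.range fun i => (U i, (0 : Fin N → F))) ∪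
       (Set.range fun i => ((0 : Fin N → F), U i)) ∪
       (Set.range fun j => (V j, fun t => ∑ l, M j l * V l t))))
    (d d' d'' : ℕ)
    (hd : d = sInf {m : ℕ | ∃ x ∈ C, x ∉ dualCode C' ∧ m = hammingNorm x})
    (hd' : d' = sInf {m : ℕ | ∃ x ∈ C', x ∉ dualCode C' ∧ m = hammingNorm x})
    (hd'' : d'' = sInf {m : ℕ | ∃ u v : Fin N → F,
      u ∈ C' ∧ u ∉ dualCode C' ∧ v ∈ C' ∧ v ∉ dualCode C' ∧
      (∀ lam : F, v ≠ lam • u) ∧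
      m = (Finset.univ.filter fun i : Fin N => u i ≠ 0 ∨ v i ≠ 0).card}) :
    (∀ u v : Fin N → F, (u, v) ∈ S → (u, v) ≠ 0 →
      ¬(u ∈ dualCode C' ∧ v ∈ dualCode C') →
      min d d'' ≤ (Finset.univ.filter fun i : Fin N => u i ≠ 0 ∨ v i ≠ 0).card) ∧
    (∀ u v : Fin N → F, (u, v) ∈ S → (u, v) ∉ sympDual S →
      min d (Nat.ceil (((Fintype.card F + 1) * d' : ℚ) / (Fintype.card F : ℚ)))
        ≤ (Finset.univ.filter fun i : Fin N => u i ≠ 0 ∨ v i ≠ 0).card) := by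
  have hSC' : S ≤ C'.prod C' := hS ▸ hC' ▸ steaneCode_le_prod U V M
  have hCC' : C ≤ C' := hC ▸ hC' ▸ span_mono (Set.Sum.elim_range U V ▸ Set.subset_union_left)
  have hDC : dualCode C' ≤ C := (dualCode_antitone hCC').trans hCdual
  have hdich : ∀ u v, (u, v) ∈ S →
      (u ∈ C ∧ v ∈ C) ∨ (u ∉ C ∧ ∀ μ : F, v + μ • u ∉ C) := by
    subst hC hS
    exact fun u v => mem_steaneCode_dichotomy hW hMev
  have key : ∀ u v, (u, v) ∈ S → ¬(u ∈ dualCode C' ∧ v ∈ dualCode C') →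
      min d d'' ≤ symplecticWeight u v ∧
        min d ⌈((Fintype.card F + 1) * d' : ℚ) / Fintype.card F⌉₊ ≤ symplecticWeight u v := by
    intro u v huv hD
    obtain ⟨huC', hvC'⟩ := hSC' huv
    rcases hdich u v huv with ⟨huC, hvC⟩ | ⟨huC, hvC⟩
    · have hdw : d ≤ symplecticWeight u v :=
        hd.trans_le (relMinWeight_le_symplecticWeight huC hvC hD)
      exact ⟨min_le_of_left_le hdw, min_le_of_left_le hdw⟩
    · have huD : u ∉ dualCode C' := fun h => huC (hDC h)
      have hvD : ∀ μ : F, v + μ • u ∉ dualCode C' := fun μ h => hvC μ (hDC h)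
      refine ⟨min_le_of_right_le
        (hd''.trans_le (relPairMinWeight_le_symplecticWeight huC' hvC' huD hvD)), ?_⟩
      rw [hd']
      exact min_le_of_right_le (ceil_relMinWeight_le_symplecticWeight huC' hvC' huD hvD)
  exact ⟨fun u v huv _ hD => (key u v huv hD).1,
    fun u v huv hS => (key u v huv fun hD => hS (prod_dualCode_le_sympDual hSC' hD)).2⟩

/-- minimum distance of Steane's enlarged code. -/
theorem stmt16 {F : Type*} [Field F] [Fintype F] [DecidableEq F]
    {N r s : ℕ} (hs : 2 ≤ s)
    (U : Fin r → Fin N → F) (V : Fin s → Fin N → F)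
    (hW : LinearIndependent F (Sum.elim U V))
    (C C' : Submodule F (Fin N → F))
    (hC : C = Submodule.span F (Set.range U))
    (hC' : C' = Submodule.span F (Set.range (Sum.elim U V)))
    (hCdual : dualCode C ≤ C)
    (M : Matrix (Fin s) (Fin s) F) (hMunit : IsUnit M.det)
    (hMev : ∀ (x : Fin s → F) (lam : F), x ≠ 0 → Matrix.vecMul x M ≠ lam • x)
    (S : Submodule F ((Fin N → F) × (Fin N → F)))
    (hS : S = Submodule.span F
      ((Set.range fun i => (U i, (0 : Fin N → F))) ∪
       (Set.range fun i => ((0 : Fin N → F), U i)) ∪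
       (Set.range fun j => (V j, fun t => ∑ l, M j l * V l t))))
    (d d' d'' : ℕ)
    (hd : d = sInf {m : ℕ | ∃ x ∈ C, x ∉ dualCode C' ∧ m = hammingNorm x})
    (hd' : d' = sInf {m : ℕ | ∃ x ∈ C', x ∉ dualCode C' ∧ m = hammingNorm x})
    (hd'' : d'' = sInf {m : ℕ | ∃ u v : Fin N → F,
      u ∈ C' ∧ u ∉ dualCode C' ∧ v ∈ C' ∧ v ∉ dualCode C' ∧
      (∀ lam : F, v ≠ lam • u) ∧
      m = (Finset.univ.filter fun i : Fin N => u i ≠ 0 ∨ v i ≠ 0).card}) :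
    (∀ u v : Fin N → F, (u, v) ∈ S → (u, v) ≠ 0 →
      ¬(u ∈ dualCode C' ∧ v ∈ dualCode C') →
      min d d'' ≤ (Finset.univ.filter fun i : Fin N => u i ≠ 0 ∨ v i ≠ 0).card) ∧
    (∀ u v : Fin N → F, (u, v) ∈ S → (u, v) ∉ sympDual S →
      min d (Nat.ceil (((Fintype.card F + 1) * d' : ℚ) / (Fintype.card F : ℚ)))
        ≤ (Finset.univ.filter fun i : Fin N => u i ≠ 0 ∨ v i ≠ 0).card) :=
  stmt16_general U V hW C C' hC hC' hCdual M hMev S hS d d' d'' hd hd' hd''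
end

section
/- For every even prime power q that is a square (q = 2^{2m}, m ≥ 1) and every integer n ≥ 3, there exists an [n, n−1] linear code C1 over F_q such that: (A') C1^⊥ = span{b} for some vector b all of whose coordinates are nonzero and with ⟨b,b⟩ = 0 (b is self-orthogonal); and (B') there exist vectors g_1,…,g_{n−2} ∈ C1 with ⟨g_i, g_j⟩ = δ_{ij} which together with b form a basis of C1. In particular (C1, C1) is an [[n, n−2, 2]] code pair. -/
open Matrix

section

variable {F : Type*} [Field F]

section DualCode

variable {ι : Type*} [Fintype ι]

lemma mem_dualCode_span_singleton {b y : ι → F} :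
    y ∈ dualCode (Submodule.span F {b}) ↔ b ⬝ᵥ y = 0 := by
  refine ⟨fun h => h b (Submodule.mem_span_singleton_self b), fun h x hx => ?_⟩
  obtain ⟨c, rfl⟩ := Submodule.mem_span_singleton.mp hx
  rw [smul_dotProduct, h, smul_zero]

lemma dualCode_span_singleton_eq_ker [DecidableEq ι] (b : ι → F) :
    dualCode (Submodule.span F {b}) = LinearMap.ker (dotProductEquiv F ι b) := by
  ext y
  rw [mem_dualCode_span_singleton, LinearMap.mem_ker]
  rfl

lemma finrank_dualCode_span_singleton {b : ι → F} (hb : b ≠ 0) :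
    Module.finrank F (dualCode (Submodule.span F {b})) = Fintype.card ι - 1 := by
  classical
  have h := Module.Dual.finrank_ker_add_one_of_ne_zero
    ((dotProductEquiv F ι).map_ne_zero_iff.mpr hb)
  rw [← dualCode_span_singleton_eq_ker, Module.finrank_fintype_fun_eq_card] at h
  omega

variable {κ : Type*} [Fintype κ] [DecidableEq κ] {g : κ → ι → F}

lemma sum_smul_dotProduct_of_orthonormal
    (hg : ∀ i j, g i ⬝ᵥ g j = if i = j then 1 else 0) (c : κ → F) (j : κ) :
    (∑ i, c i • g i) ⬝ᵥ g j = c j := by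
  simp [sum_dotProduct, smul_dotProduct, hg]

lemma linearIndependent_of_orthonormal
    (hg : ∀ i j, g i ⬝ᵥ g j = if i = j then 1 else 0) : LinearIndependent F g :=
  Fintype.linearIndependent_iff.mpr fun c hc j => by
    rw [← sum_smul_dotProduct_of_orthonormal hg c j, hc, zero_dotProduct]

lemma disjoint_span_singleton_span_range_of_orthonormal {b : ι → F}
    (hg : ∀ i j, g i ⬝ᵥ g j = if i = j then 1 else 0) (hbg : ∀ i, b ⬝ᵥ g i = 0) :
    Disjoint (Submodule.span F {b}) (Submodule.span F (Set.range g)) := by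
  rw [Submodule.disjoint_def]
  intro x hxb hxg
  obtain ⟨c, rfl⟩ := (Submodule.mem_span_range_iff_exists_fun F).mp hxg
  obtain ⟨t, ht⟩ := Submodule.mem_span_singleton.mp hxb
  have hc : c = 0 := funext fun j => by
    rw [← sum_smul_dotProduct_of_orthonormal hg c j, ← ht, smul_dotProduct, hbg, smul_zero,
      Pi.zero_apply]
  simp [hc]

lemma dualCode_span_singleton_eq_sup_of_orthonormal {b : ι → F} (hb : b ≠ 0)
    (hbb : b ⬝ᵥ b = 0) (hbg : ∀ i, b ⬝ᵥ g i = 0)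
    (hg : ∀ i j, g i ⬝ᵥ g j = if i = j then 1 else 0)
    (hcard : Fintype.card κ + 2 = Fintype.card ι) :
    dualCode (Submodule.span F {b}) =
      Submodule.span F {b} ⊔ Submodule.span F (Set.range g) := by
  have hle : Submodule.span F {b} ⊔ Submodule.span F (Set.range g) ≤
      dualCode (Submodule.span F {b}) := by
    refine sup_le ?_ ?_ <;> rw [Submodule.span_le]
    · simpa [mem_dualCode_span_singleton] using hbb
    · rintro _ ⟨i, rfl⟩
      exact mem_dualCode_span_singleton.mpr (hbg i)
  refine (Submodule.eq_of_le_of_finrank_le hle (le_of_eq ?_)).symm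
  have hsum := Submodule.finrank_sup_add_finrank_inf_eq
    (Submodule.span F {b}) (Submodule.span F (Set.range g))
  rw [(disjoint_span_singleton_span_range_of_orthonormal hg hbg).eq_bot, finrank_bot,
    finrank_span_singleton hb, finrank_span_eq_card (linearIndependent_of_orthonormal hg)]
    at hsum
  rw [finrank_dualCode_span_singleton hb]
  omega

end DualCode

section CharTwo

variable [CharP F 2] {ι : Type*} [Fintype ι]

lemma dotProduct_self_eq_sum_mul_sum (b : ι → F) :
    b ⬝ᵥ b = (∑ i, b i) * ∑ i, b i := by
  rw [CharTwo.sum_mul_self]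
  rfl

variable [DecidableEq ι]

def correctedUnitVector (b : ι → F) (p q j : ι) : ι → F :=
  Pi.single j 1 + (b j / (b p + b q)) • (Pi.single p 1 + Pi.single q 1)

lemma dotProduct_correctedUnitVector {b : ι → F} {p q : ι} (hpq : b p + b q ≠ 0) (j : ι) :
    b ⬝ᵥ correctedUnitVector b p q j = 0 := by
  rw [correctedUnitVector, dotProduct_add, dotProduct_smul, dotProduct_add, dotProduct_single,
    dotProduct_single, dotProduct_single, smul_eq_mul, mul_one, mul_one, mul_one,
    div_mul_cancel₀ _ hpq, CharTwo.add_self_eq_zero]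

lemma correctedUnitVector_dotProduct_correctedUnitVector {b : ι → F} {p q i j : ι}
    (hpq : p ≠ q) (hip : i ≠ p) (hiq : i ≠ q) (hjp : j ≠ p) (hjq : j ≠ q) :
    correctedUnitVector b p q i ⬝ᵥ correctedUnitVector b p q j = if i = j then 1 else 0 := by
  simp [correctedUnitVector, dotProduct_add, dotProduct_smul, Pi.single_apply, hip, hiq, hjp,
    hjq, hpq, hpq.symm, eq_comm, CharTwo.add_self_eq_zero]

lemma add_natCast_ne_zero {a : F} (ha₀ : a ≠ 0) (ha₁ : a ≠ 1) (k : ℕ) : a + k ≠ 0 := by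
  rcases CharTwo.natCast_cases (R := F) k with hk | hk
  · rwa [hk, add_zero]
  · rwa [hk, Ne, CharTwo.add_eq_zero]

def fullWeightVector (a : F) (k : ℕ) : Fin (k + 3) → F :=
  vecCons (a * (a + k)) (vecCons ((a + 1) * (a + k)) (vecCons a fun _ => 1))

lemma fullWeightVector_ne_zero {a : F} (ha₀ : a ≠ 0) (ha₁ : a ≠ 1) (k : ℕ) (i : Fin (k + 3)) :
    fullWeightVector a k i ≠ 0 := by
  have hs := add_natCast_ne_zero ha₀ ha₁ k
  have ha : a + 1 ≠ 0 := by rwa [Ne, CharTwo.add_eq_zero]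
  refine Fin.cases (mul_ne_zero ha₀ hs) (Fin.cases (mul_ne_zero ha hs)
    (Fin.cases ha₀ fun _ => one_ne_zero)) i

lemma sum_fullWeightVector (a : F) (k : ℕ) : ∑ i, fullWeightVector a k i = 0 := by
  simp only [fullWeightVector, Fin.sum_univ_succ, cons_val_zero, cons_val_succ, Finset.sum_const,
    Finset.card_univ, Fintype.card_fin, nsmul_eq_mul, mul_one]
  linear_combination ((a + k) * (a + 1)) * CharTwo.two_eq_zero (R := F)

lemma fullWeightVector_zero_add_one (a : F) (k : ℕ) :
    fullWeightVector a k 0 + fullWeightVector a k 1 = a + k := by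
  simp only [fullWeightVector, cons_val_zero, cons_val_one]
  linear_combination (a * (a + k)) * CharTwo.two_eq_zero (R := F)

lemma exists_fullWeight_selfOrthogonal_orthonormal {a : F} (ha₀ : a ≠ 0) (ha₁ : a ≠ 1)
    (k : ℕ) :
    ∃ (b : Fin (k + 3) → F) (g : Fin (k + 1) → Fin (k + 3) → F),
      (∀ i, b i ≠ 0) ∧ b ⬝ᵥ b = 0 ∧ (∀ i, b ⬝ᵥ g i = 0) ∧
      ∀ i j, g i ⬝ᵥ g j = if i = j then 1 else 0 := by
  set b := fullWeightVector a k
  have hT : b 0 + b 1 ≠ 0 := by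
    rw [fullWeightVector_zero_add_one]
    exact add_natCast_ne_zero ha₀ ha₁ k
  refine ⟨b, fun i => correctedUnitVector b 0 1 i.succ.succ, fullWeightVector_ne_zero ha₀ ha₁ k,
    by rw [dotProduct_self_eq_sum_mul_sum, sum_fullWeightVector, zero_mul],
    fun i => dotProduct_correctedUnitVector hT _, fun i j => ?_⟩
  rw [correctedUnitVector_dotProduct_correctedUnitVector Fin.zero_ne_one (Fin.succ_ne_zero _)
    (Fin.succ_succ_ne_one _) (Fin.succ_ne_zero _) (Fin.succ_succ_ne_one _)]
  simp only [Fin.succ_inj]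

end CharTwo

lemma charP_two_of_card_eq_two_pow [Fintype F] {e : ℕ} (he : e ≠ 0)
    (hcard : Fintype.card F = 2 ^ e) : CharP F 2 := by
  refine ringChar.of_eq (FiniteField.even_card_iff_char_two.mpr ?_)
  rw [hcard, Nat.pow_mod, Nat.mod_self, zero_pow he, Nat.zero_mod]

lemma exists_ne_zero_ne_one [Fintype F] (hF : 2 < Fintype.card F) :
    ∃ a : F, a ≠ 0 ∧ a ≠ 1 := by
  classical
  by_contra! h
  have hsub : (Finset.univ : Finset F) ⊆ {0, 1} := fun a _ => by
    by_cases ha : a = 0 <;> simp [ha, h a]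
  have := (Finset.card_le_card hsub).trans Finset.card_le_two
  rw [Finset.card_univ] at this
  omega

end

/-- over any field of order `2^{2m}` and for any `n ≥ 3` there
is an `[n, n-1]` code `C1 = (span b)^⊥` with `b` full-weight self-orthogonal,
and orthonormal vectors `g_1, …, g_{n-2}` which together with `b` form a
basis of `C1`. -/
theorem stmt17 {F : Type*} [Field F] [Fintype F]
    (hq : ∃ m : ℕ, 1 ≤ m ∧ Fintype.card F = 2 ^ (2 * m))
    {n : ℕ} (hn : 3 ≤ n) :
    ∃ (b : Fin n → F) (g : Fin (n - 2) → Fin n → F),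
      (∀ i, b i ≠ 0) ∧
      dotProduct b b = 0 ∧
      (∀ i, dotProduct b (g i) = 0) ∧
      (∀ i j, dotProduct (g i) (g j) = if i = j then 1 else 0) ∧
      dualCode (Submodule.span F {b}) =
        Submodule.span F {b} ⊔ Submodule.span F (Set.range g) ∧
      Module.finrank F (dualCode (Submodule.span F {b})) = n - 1 := by
  obtain ⟨m, hm, hcard⟩ := hq
  have : CharP F 2 := charP_two_of_card_eq_two_pow (by omega) hcard
  obtain ⟨a, ha₀, ha₁⟩ := exists_ne_zero_ne_one (F := F) <| by
    rw [hcard]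
    calc 2 < 2 ^ 2 := by norm_num
      _ ≤ 2 ^ (2 * m) := Nat.pow_le_pow_right two_pos (by omega)
  obtain ⟨k, rfl⟩ : ∃ k, n = k + 3 := ⟨n - 3, by omega⟩
  obtain ⟨b, g, hb, hbb, hbg, hg⟩ := exists_fullWeight_selfOrthogonal_orthonormal ha₀ ha₁ k
  have hb₀ : b ≠ 0 := fun h => hb 0 (congrFun h 0)
  refine ⟨b, g, hb, hbb, hbg, hg,
    dualCode_span_singleton_eq_sup_of_orthonormal hb₀ hbb hbg hg (by simp), ?_⟩
  rw [finrank_dualCode_span_singleton hb₀, Fintype.card_fin]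
end
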